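/- arXiv:1902.02379 — 2 statements merged into one kernel-verified Lean document; each statement's English description precedes it below -/
import Mathlib

section
/- Let I_n ⊆ [0,1] be pairwise disjoint intervals with Lebesgue measure λ(I_n) < e^{−12ⁿ}, and let f(t) = Σ_{n=1}^∞ (2ⁿ λ(I_n))^{−1} χ_{I_n}(t). Then f is a nonnegative integrable function with ∫_ℝ f dλ = 1, and the measure μ with density f satisfies Σ_{n=1}^∞ ∫∫_{I_n × I_n} log|x−y| dμ(x) dμ(y) ≤ Σ_{n=1}^∞ 4^{−n} log(e^{−12ⁿ}) = −∞. -/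
/-!
On `I n` the density is the constant `(2^(n+1) λ(I n))⁻¹`, so `μ(I n) = 2^-(n+1)`; these masses
sum to `1`. Off the diagonal, which is `μ ⊗ μ`-null, two points of `I n` are at distance less
than `e^{-12^(n+1)}`, so `-log|x - y| > 12^(n+1)` there and the `n`-th energy integral is at least
`12^(n+1) μ(I n)² = 3^(n+1) ≥ 1`. Infinitely many terms `≥ 1` make the sum infinite.
-/

open MeasureTheory ENNReal Set

section DisjointIndicator

variable {α M : Type*} [AddCommMonoid M] [TopologicalSpace M] {s : ℕ → Set α}

theorem tsum_indicator_const_apply_of_mem (hs : Pairwise (Function.onFun Disjoint s))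
    (c : ℕ → M) {t : α} {m : ℕ} (ht : t ∈ s m) :
    ∑' n, (s n).indicator (fun _ => c n) t = c m :=
  (tsum_eq_single m fun _ hn => indicator_of_notMem
    (disjoint_left.1 (hs hn).symm ht) _).trans (indicator_of_mem ht _)

theorem map_tsum_indicator_const_apply {N : Type*} [AddCommMonoid N] [TopologicalSpace N]
    (hs : Pairwise (Function.onFun Disjoint s)) (c : ℕ → M) {φ : M → N} (hφ : φ 0 = 0) (t : α) :
    φ (∑' n, (s n).indicator (fun _ => c n) t) = ∑' n, (s n).indicator (fun _ => φ (c n)) t := by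
  by_cases ht : ∃ m, t ∈ s m
  · obtain ⟨m, hm⟩ := ht
    rw [tsum_indicator_const_apply_of_mem hs _ hm, tsum_indicator_const_apply_of_mem hs _ hm]
  · rw [not_exists] at ht
    simp [indicator_of_notMem (ht _), hφ]

end DisjointIndicator

section StepDensity

variable {α : Type*} [MeasurableSpace α] (μ : Measure α) {s : ℕ → Set α}

theorem lintegral_tsum_indicator_const (hs : ∀ n, MeasurableSet (s n)) (c : ℕ → ℝ≥0∞) :
    ∫⁻ t, ∑' n, (s n).indicator (fun _ => c n) t ∂μ = ∑' n, c n * μ (s n) := by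
  rw [lintegral_tsum fun n => (measurable_const.indicator (hs n)).aemeasurable]
  simp_rw [lintegral_indicator_const (hs _)]

theorem withDensity_tsum_indicator_const_apply (hs : ∀ n, MeasurableSet (s n))
    (hdisj : Pairwise (Function.onFun Disjoint s)) (c : ℕ → ℝ≥0∞) (m : ℕ) :
    μ.withDensity (fun t => ∑' n, (s n).indicator (fun _ => c n) t) (s m) = c m * μ (s m) := by
  rw [withDensity_apply _ (hs m), setLIntegral_congr_fun (hs m)
    fun t ht => tsum_indicator_const_apply_of_mem hdisj c ht, setLIntegral_const]

end StepDensity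

theorem MeasureTheory.Measure.prod_diagonal_eq_zero {α : Type*} [MeasurableSpace α] [MeasurableEq α]
    (μ ν : Measure α) [SFinite ν] [NullSingletonClass ν] : μ.prod ν (diagonal α) = 0 := by
  rw [Measure.prod_apply measurableSet_diagonal]
  simp [Set.preimage, diagonal]

theorem mul_measure_sq_le_setLIntegral_prod {α : Type*} [MeasurableSpace α] [MeasurableEq α]
    {ν : Measure α} [SFinite ν] [NullSingletonClass ν] {F : α × α → ℝ≥0∞} (hF : Measurable F)
    {s : Set α} {K : ℝ≥0∞} (hK : ∀ x ∈ s, ∀ y ∈ s, x ≠ y → K ≤ F (x, y)) :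
    K * ν s ^ 2 ≤ ∫⁻ q in s ×ˢ s, F q ∂ν.prod ν := by
  calc K * ν s ^ 2 = ∫⁻ _ in s ×ˢ s \ diagonal α, K ∂ν.prod ν := by
        rw [setLIntegral_const, measure_sdiff_null (Measure.prod_diagonal_eq_zero ν ν),
          Measure.prod_prod, sq]
    _ ≤ ∫⁻ q in s ×ˢ s \ diagonal α, F q ∂ν.prod ν :=
        setLIntegral_mono hF fun q ⟨⟨hx, hy⟩, hne⟩ => hK q.1 hx q.2 hy hne
    _ ≤ ∫⁻ q in s ×ˢ s, F q ∂ν.prod ν := lintegral_mono_set sdiff_subset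

theorem lt_neg_log_abs_sub_of_mem_Icc {a b x y K : ℝ} (hx : x ∈ Icc a b) (hy : y ∈ Icc a b)
    (hxy : x ≠ y) (hab : b - a < Real.exp (-K)) : K < -Real.log |x - y| := by
  have hpos : 0 < |x - y| := abs_pos.2 (sub_ne_zero.2 hxy)
  have hle : |x - y| ≤ b - a :=
    abs_sub_le_iff.2 ⟨by linarith [hx.2, hy.1], by linarith [hx.1, hy.2]⟩
  have := Real.log_lt_log hpos (hle.trans_lt hab)
  rw [Real.log_exp] at this
  linarith

theorem three_pow_le_setLIntegral_neg_log_abs_sub {ν : Measure ℝ} [SFinite ν]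
    [NullSingletonClass ν] {a b : ℝ} {n : ℕ} (hab : b - a < Real.exp (-(12 ^ (n + 1) : ℝ)))
    (hν : ν (Icc a b) = 2⁻¹ ^ (n + 1)) :
    3 ^ (n + 1) ≤ ∫⁻ q in Icc a b ×ˢ Icc a b, ENNReal.ofReal (-Real.log |q.1 - q.2|) ∂ν.prod ν := by
  have hF : Measurable fun q : ℝ × ℝ => ENNReal.ofReal (-Real.log |q.1 - q.2|) := by fun_prop
  refine le_trans ?_ (mul_measure_sq_le_setLIntegral_prod hF (K := 12 ^ (n + 1)) ?_)
  · have h12 : (12 : ℝ≥0∞) * (2⁻¹ * 2⁻¹) = 3 := by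
      rw [← ENNReal.toReal_eq_toReal_iff' (by finiteness) (by simp)]
      norm_num
    rw [hν, sq, ← mul_pow, ← mul_pow, h12]
  · intro x hx y hy hxy
    rw [← ofReal_ofNat, ← ENNReal.ofReal_pow (by norm_num)]
    exact ENNReal.ofReal_le_ofReal (lt_neg_log_abs_sub_of_mem_Icc hx hy hxy hab).le

theorem ofReal_inv_two_pow_mul_toReal_mul_self (n : ℕ) {v : ℝ≥0∞} (h0 : v ≠ 0) (htop : v ≠ ⊤) :
    ENNReal.ofReal ((2:ℝ) ^ n * v.toReal)⁻¹ * v = 2⁻¹ ^ n := by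
  have hv : 0 < v.toReal := ENNReal.toReal_pos h0 htop
  rw [ENNReal.ofReal_inv_of_pos (by positivity), ENNReal.ofReal_mul (by positivity),
    ENNReal.ofReal_toReal htop, ENNReal.mul_inv (by simp) (by simp), mul_assoc,
    ENNReal.inv_mul_cancel h0 htop, mul_one, ENNReal.ofReal_pow zero_le_two, ofReal_ofNat,
    ENNReal.inv_pow]

theorem ENNReal.tsum_inv_two_pow_succ : ∑' n : ℕ, (2⁻¹ : ℝ≥0∞) ^ (n + 1) = 1 := by
  rw [ENNReal.tsum_geometric_add_one, one_sub_inv_two, inv_inv]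
  exact ENNReal.inv_mul_cancel two_ne_zero ofNat_ne_top

theorem stmt_9_general (I : ℕ → Set ℝ)
    (hIint : ∀ n, ∃ a b : ℝ, a < b ∧ I n = Set.Icc a b)
    (hdisj : Pairwise (Function.onFun Disjoint I))
    (hsmall : ∀ n, volume (I n) < ENNReal.ofReal (Real.exp (-(12 ^ (n + 1) : ℝ))))
    (f : ℝ → ℝ)
    (hf : ∀ t, f t = ∑' n : ℕ,
      Set.indicator (I n) (fun _ => ((2:ℝ) ^ (n + 1) * (volume (I n)).toReal)⁻¹) t)
    (μ : Measure ℝ) (hμ : μ = volume.withDensity fun t => ENNReal.ofReal (f t)) :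
    (∀ t, 0 ≤ f t) ∧ Integrable f volume ∧ (∫ t, f t) = 1 ∧
      ∑' n : ℕ, ∫⁻ q in (I n) ×ˢ (I n),
        ENNReal.ofReal (-(Real.log |q.1 - q.2|)) ∂(μ.prod μ) = ⊤ := by
  choose a b hab hI using hIint
  obtain rfl : I = fun n => Icc (a n) (b n) := funext hI
  set c : ℕ → ℝ := fun n => ((2:ℝ) ^ (n + 1) * (volume (Icc (a n) (b n))).toReal)⁻¹
  set g : ℝ → ℝ≥0∞ := fun t => ∑' n, (Icc (a n) (b n)).indicator (fun _ => ENNReal.ofReal (c n)) t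
  have hg : Measurable g := Measurable.tsum fun n => measurable_const.indicator measurableSet_Icc
  have hf_nonneg t : 0 ≤ f t :=
    hf t ▸ tsum_nonneg fun n => indicator_nonneg (fun _ _ => by positivity) t
  have hfg : (fun t => ENNReal.ofReal (f t)) = g :=
    funext fun t => hf t ▸ map_tsum_indicator_const_apply hdisj c ofReal_zero t
  have hf_eq : f = fun t => (g t).toReal := funext fun t => by
    rw [← congrFun hfg t, toReal_ofReal (hf_nonneg t)]
  have hmass n : ENNReal.ofReal (c n) * volume (Icc (a n) (b n)) = 2⁻¹ ^ (n + 1) :=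
    ofReal_inv_two_pow_mul_toReal_mul_self _ (by simp [hab n]) measure_Icc_lt_top.ne
  have hg_total : ∫⁻ t, g t = 1 := by
    simp_rw [g, lintegral_tsum_indicator_const _ (fun _ => measurableSet_Icc), hmass,
      ENNReal.tsum_inv_two_pow_succ]
  have hg_fin : ∫⁻ t, g t ≠ ⊤ := by simp [hg_total]
  refine ⟨hf_nonneg, hf_eq ▸ integrable_toReal_of_lintegral_ne_top hg.aemeasurable hg_fin, ?_, ?_⟩
  · rw [hf_eq, integral_toReal hg.aemeasurable (ae_lt_top hg hg_fin), hg_total, toReal_one]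
  rw [hfg] at hμ
  subst hμ
  have hlength n : b n - a n < Real.exp (-(12 ^ (n + 1) : ℝ)) :=
    (ofReal_lt_ofReal_iff (Real.exp_pos _)).1 (Real.volume_Icc ▸ hsmall n)
  have hμI n : volume.withDensity g (Icc (a n) (b n)) = 2⁻¹ ^ (n + 1) :=
    (withDensity_tsum_indicator_const_apply _ (fun _ => measurableSet_Icc) hdisj _ n).trans
      (hmass n)
  refine top_unique (calc
    ⊤ = ∑' _ : ℕ, (1 : ℝ≥0∞) := (tsum_const_eq_top_of_ne_zero one_ne_zero).symm
    _ ≤ ∑' n : ℕ, (3 : ℝ≥0∞) ^ (n + 1) := ENNReal.tsum_le_tsum fun n => one_le_pow₀ (by norm_num)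
    _ ≤ _ := ENNReal.tsum_le_tsum fun n =>
      three_pow_le_setLIntegral_neg_log_abs_sub (hlength n) (hμI n))

theorem stmt_9 (I : ℕ → Set ℝ)
    (hIint : ∀ n, ∃ a b : ℝ, a < b ∧ I n = Set.Icc a b)
    (hIsub : ∀ n, I n ⊆ Set.Icc (0:ℝ) 1)
    (hdisj : Pairwise (Function.onFun Disjoint I))
    (hsmall : ∀ n, volume (I n) < ENNReal.ofReal (Real.exp (-(12 ^ (n + 1) : ℝ))))
    (f : ℝ → ℝ)
    (hf : ∀ t, f t = ∑' n : ℕ,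
      Set.indicator (I n) (fun _ => ((2:ℝ) ^ (n + 1) * (volume (I n)).toReal)⁻¹) t)
    (μ : Measure ℝ) (hμ : μ = volume.withDensity fun t => ENNReal.ofReal (f t)) :
    (∀ t, 0 ≤ f t) ∧ Integrable f volume ∧ (∫ t, f t) = 1 ∧
      ∑' n : ℕ, ∫⁻ q in (I n) ×ˢ (I n),
        ENNReal.ofReal (-(Real.log |q.1 - q.2|)) ∂(μ.prod μ) = ⊤ :=
  stmt_9_general I hIint hdisj hsmall f hf μ hμ
end

section
/- Let μ = (1/2)σ + (1/2)δ_a where σ is the standard semicircle law on [−2,2] (density (1/(2π))√(4−t²)) and |a| > 2. Define g_ε(t) = 2∫ (t−s)/((t−s)²+ε²) dμ(s). Then g_ε converges in L²(μ) as ε → 0⁺. -/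
/-!
On the support `[-2, 2] ∪ {a}` of `μ`, write `g_ε = H_ε + K_ε(· - a)`, where `K_ε(u) = u/(u² + ε²)`
and `H_ε(t) = ∫ K_ε(t - s) dσ(s)`. Since `K_ε` is odd,
`H_ε(t) = ∫_{u > 0} K_ε(u) (f(t - u) - f(t + u)) du` for the semicircle density `f`. As `f` is
Hölder-continuous of exponent `1/2` and vanishes off `[-2, 2]`, this integrand is bounded by
`C / √u` on a bounded interval, uniformly in `ε` and in `t` ranging over a bounded set; so `H_ε(t)`
converges by dominated convergence and stays uniformly bounded. The point-mass term is bounded by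
`1 / (|a| - 2)` on `[-2, 2]` because `|a| > 2`, and vanishes at `t = a`. Bounded pointwise
convergence on the finite measure `μ` then gives convergence in `L²(μ)`.
-/

open MeasureTheory Set Filter Real
open scoped ENNReal Topology

theorem Real.abs_sqrt_sub_sqrt_le (x y : ℝ) : |√x - √y| ≤ √|x - y| := by
  wlog hyx : y ≤ x generalizing x y
  · rw [abs_sub_comm, abs_sub_comm x]
    exact this y x (le_of_not_ge hyx)
  rw [abs_of_nonneg (sub_nonneg.2 hyx), abs_of_nonneg (sub_nonneg.2 (sqrt_le_sqrt hyx))]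
  rcases lt_or_ge y 0 with hy | hy
  · rw [sqrt_eq_zero_of_nonpos hy.le, sub_zero]
    exact sqrt_le_sqrt (by linarith)
  · rw [le_sqrt (sub_nonneg.2 (sqrt_le_sqrt hyx)) (by linarith)]
    have hyx' : √y * √y ≤ √x * √y :=
      mul_le_mul_of_nonneg_right (sqrt_le_sqrt hyx) (sqrt_nonneg y)
    nlinarith [sq_sqrt hy, sq_sqrt (hy.trans hyx), mul_self_sqrt hy]

theorem integral_eq_integral_Ioi_add_comp_neg {E : Type*} [NormedAddCommGroup E]
    [NormedSpace ℝ E] {φ : ℝ → E} (hφ : Integrable φ) :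
    ∫ u, φ u = ∫ u in Ioi 0, (φ u + φ (-u)) := by
  rw [integral_add hφ.integrableOn hφ.comp_neg.integrableOn, integral_comp_neg_Ioi, neg_zero,
    add_comm, intervalIntegral.integral_Iic_add_Ioi hφ.integrableOn hφ.integrableOn]

theorem two_mul_integral_half_smul_add_half_smul_dirac {α : Type*} [MeasurableSpace α]
    [MeasurableSingletonClass α] {ν : Measure α} {h : α → ℝ} (hh : Integrable h ν) (a : α) :
    2 * ∫ x, h x ∂((1 / 2 : ℝ≥0∞) • ν + (1 / 2 : ℝ≥0∞) • Measure.dirac a) =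
      ∫ x, h x ∂ν + h a := by
  rw [integral_add_measure (hh.smul_measure (by simp))
      ((integrable_dirac enorm_lt_top).smul_measure (by simp)),
    integral_smul_measure, integral_smul_measure, integral_dirac]
  norm_num
  ring

theorem tendsto_eLpNorm_sub_of_tendsto_ae_of_bounded {α ι E : Type*} [MeasurableSpace α]
    [NormedAddCommGroup E] {μ : Measure α} [IsFiniteMeasure μ] {l : Filter ι}
    [l.IsCountablyGenerated] {p : ℝ≥0∞} (hp0 : p ≠ 0) (hp : p ≠ ∞) {F : ι → α → E} {g : α → E}
    {C : ℝ} (hF : ∀ᶠ i in l, AEStronglyMeasurable (F i) μ) (hg : AEStronglyMeasurable g μ)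
    (hFC : ∀ᶠ i in l, ∀ᵐ x ∂μ, ‖F i x‖ ≤ C) (hgC : ∀ᵐ x ∂μ, ‖g x‖ ≤ C)
    (hlim : ∀ᵐ x ∂μ, Tendsto (fun i => F i x) l (𝓝 (g x))) :
    Tendsto (fun i => eLpNorm (fun x => F i x - g x) p μ) l (𝓝 0) := by
  have hp' : 0 < p.toReal := ENNReal.toReal_pos hp0 hp
  have hint : Tendsto (fun i => ∫⁻ x, ‖F i x - g x‖ₑ ^ p.toReal ∂μ) l (𝓝 0) := by
    simpa using tendsto_lintegral_filter_of_dominated_convergence' (f := 0)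
      (fun _ => ENNReal.ofReal (C + C) ^ p.toReal)
      (by filter_upwards [hF] with i hi using (hi.sub hg).enorm.pow_const _)
      (by
        filter_upwards [hFC] with i hi
        filter_upwards [hi, hgC] with x hFx hgx
        rw [← ofReal_norm]
        gcongr
        exact norm_sub_le_of_le hFx hgx)
      (by simp [lintegral_const, ENNReal.mul_eq_top])
      (by
        filter_upwards [hlim] with x hx
        simpa [Function.comp_def, hp'] using
          ((ENNReal.continuous_rpow_const (y := p.toReal)).tendsto _).comp
            (hx.sub_const (g x)).enorm)
  simp_rw [eLpNorm_eq_lintegral_rpow_enorm_toReal hp0 hp]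
  simpa [Function.comp_def, hp'] using
    ((ENNReal.continuous_rpow_const (y := 1 / p.toReal)).tendsto _).comp hint

noncomputable def semicircleDensity (s : ℝ) : ℝ := √(4 - s ^ 2) / (2 * π)

-- `hilbertKernel 0 0 = 0` (division by zero), so `ε ↦ hilbertKernel ε u` is continuous at `0`
-- for every `u`.
noncomputable def hilbertKernel (ε u : ℝ) : ℝ := u / (u ^ 2 + ε ^ 2)

theorem semicircleDensity_nonneg (s : ℝ) : 0 ≤ semicircleDensity s := by
  unfold semicircleDensity; positivity

@[fun_prop]
theorem continuous_semicircleDensity : Continuous semicircleDensity := by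
  unfold semicircleDensity; fun_prop

theorem semicircleDensity_eq_zero {s : ℝ} (hs : 2 ≤ |s|) : semicircleDensity s = 0 := by
  have : 4 - s ^ 2 ≤ 0 := by nlinarith [sq_abs s]
  rw [semicircleDensity, sqrt_eq_zero_of_nonpos this, zero_div]

theorem semicircleDensity_eq_zero_of_notMem {s : ℝ} (hs : s ∉ Icc (-2) 2) :
    semicircleDensity s = 0 :=
  semicircleDensity_eq_zero (le_abs'.2 (by
    rw [mem_Icc, not_and_or, not_le, not_le] at hs
    exact hs.imp le_of_lt le_of_lt))

theorem indicator_Icc_semicircleDensity :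
    (Icc (-2 : ℝ) 2).indicator semicircleDensity = semicircleDensity := by
  ext s
  by_cases hs : s ∈ Icc (-2 : ℝ) 2
  · rw [indicator_of_mem hs]
  · rw [indicator_of_notMem hs, semicircleDensity_eq_zero_of_notMem hs]

theorem hasCompactSupport_semicircleDensity : HasCompactSupport semicircleDensity :=
  HasCompactSupport.intro isCompact_Icc fun _ => semicircleDensity_eq_zero_of_notMem

theorem abs_semicircleDensity_sub_le (x y : ℝ) :
    |semicircleDensity x - semicircleDensity y| ≤ √|x ^ 2 - y ^ 2| / (2 * π) := by
  rw [semicircleDensity, semicircleDensity, ← sub_div, abs_div,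
    abs_of_pos (by positivity : 0 < 2 * π)]
  gcongr
  calc |√(4 - x ^ 2) - √(4 - y ^ 2)| ≤ √|4 - x ^ 2 - (4 - y ^ 2)| := abs_sqrt_sub_sqrt_le _ _
    _ = √|x ^ 2 - y ^ 2| := by rw [← abs_neg]; ring_nf

theorem hilbertKernel_neg (ε u : ℝ) : hilbertKernel ε (-u) = -hilbertKernel ε u := by
  simp [hilbertKernel, neg_div]

theorem abs_hilbertKernel_le_inv_abs (ε u : ℝ) : |hilbertKernel ε u| ≤ |u|⁻¹ := by
  rcases eq_or_ne u 0 with rfl | hu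
  · simp [hilbertKernel]
  have hu' : 0 < |u| := abs_pos.2 hu
  rw [hilbertKernel, abs_div, abs_of_pos (by positivity : 0 < u ^ 2 + ε ^ 2),
    div_le_iff₀ (by positivity), ← sq_abs u]
  calc |u| = |u|⁻¹ * |u| ^ 2 := by field_simp
    _ ≤ |u|⁻¹ * (|u| ^ 2 + ε ^ 2) := by gcongr; nlinarith [sq_nonneg ε]

theorem abs_hilbertKernel_le {ε : ℝ} (hε : ε ≠ 0) (u : ℝ) :
    |hilbertKernel ε u| ≤ (2 * |ε|)⁻¹ := by
  have : 0 < |ε| := abs_pos.2 hε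
  have hden : 0 < u ^ 2 + ε ^ 2 := by positivity
  rw [hilbertKernel, abs_div, abs_of_pos hden, div_le_iff₀ hden, ← div_eq_inv_mul,
    le_div_iff₀ (by positivity)]
  nlinarith [sq_abs u, sq_abs ε, sq_nonneg (|u| - |ε|)]

theorem continuous_hilbertKernel {ε : ℝ} (hε : ε ≠ 0) : Continuous (hilbertKernel ε) :=
  continuous_id.div (by fun_prop) fun _ => by positivity

theorem measurable_hilbertKernel (ε : ℝ) : Measurable (hilbertKernel ε) := by
  unfold hilbertKernel; fun_prop

theorem tendsto_hilbertKernel (u : ℝ) :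
    Tendsto (fun ε => hilbertKernel ε u) (𝓝 0) (𝓝 (hilbertKernel 0 u)) := by
  rcases eq_or_ne u 0 with rfl | hu
  · simp [hilbertKernel]
  exact (continuous_const.div (by fun_prop) fun _ => by positivity).tendsto 0

-- `semicircleHilbert 0 t` is the principal-value Hilbert transform of the semicircle density at
-- `t`; after symmetrization the integrand stays integrable at `ε = 0`.
noncomputable def semicircleHilbert (ε t : ℝ) : ℝ :=
  ∫ u in Ioi 0, hilbertKernel ε u * (semicircleDensity (t - u) - semicircleDensity (t + u))

theorem integral_semicircleDensity_mul_hilbertKernel {ε : ℝ} (hε : ε ≠ 0) (t : ℝ) :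
    ∫ s, semicircleDensity s * hilbertKernel ε (t - s) = semicircleHilbert ε t := by
  have hint : Integrable fun u => semicircleDensity (t - u) * hilbertKernel ε u :=
    ((continuous_semicircleDensity.comp (continuous_sub_left t)).mul
      (continuous_hilbertKernel hε)).integrable_of_hasCompactSupport
      (hasCompactSupport_semicircleDensity.comp_homeomorph (Homeomorph.subLeft t)).mul_right
  rw [← integral_sub_left_eq_self _ volume t]
  simp only [sub_sub_cancel]
  rw [integral_eq_integral_Ioi_add_comp_neg hint, semicircleHilbert]
  congr 1 with u
  rw [hilbertKernel_neg, sub_neg_eq_add]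
  ring

noncomputable def semicircleHilbertBound (R u : ℝ) : ℝ :=
  (Ioc 0 (R + 2)).indicator (fun u => √R / π * (√u)⁻¹) u

theorem integrableOn_semicircleHilbertBound {R : ℝ} (hR : 0 ≤ R) :
    IntegrableOn (semicircleHilbertBound R) (Ioi 0) := by
  have hrpow : IntegrableOn (fun u : ℝ => u ^ (-(1 / 2) : ℝ)) (Ioc 0 (R + 2)) :=
    (intervalIntegrable_iff_integrableOn_Ioc_of_le (by linarith)).1
      (intervalIntegral.intervalIntegrable_rpow' (by norm_num))
  have hsqrt : IntegrableOn (fun u => √R / π * (√u)⁻¹) (Ioc 0 (R + 2)) := by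
    refine IntegrableOn.congr_fun (hrpow.const_mul (√R / π)) (fun u hu => ?_) measurableSet_Ioc
    rw [rpow_neg hu.1.le, ← sqrt_eq_rpow]
  exact ((integrable_indicator_iff measurableSet_Ioc).2 hsqrt).integrableOn

theorem semicircleDensity_sub_sub_add_eq_zero {R t u : ℝ} (ht : |t| ≤ R) (hu : R + 2 < u) :
    semicircleDensity (t - u) - semicircleDensity (t + u) = 0 := by
  have := abs_le.1 ht
  rw [semicircleDensity_eq_zero (by rw [abs_sub_comm, abs_of_nonneg (by linarith)]; linarith),
    semicircleDensity_eq_zero (by rw [abs_of_nonneg (by linarith)]; linarith), sub_zero]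

theorem norm_hilbertKernel_mul_sub_le {R t : ℝ} (ht : |t| ≤ R) (ε : ℝ) {u : ℝ} (hu : 0 < u) :
    ‖hilbertKernel ε u * (semicircleDensity (t - u) - semicircleDensity (t + u))‖ ≤
      semicircleHilbertBound R u := by
  rcases le_or_gt u (R + 2) with huR | huR
  swap
  · rw [semicircleDensity_sub_sub_add_eq_zero ht huR, mul_zero, norm_zero, semicircleHilbertBound,
      indicator_of_notMem (fun h => huR.not_ge h.2)]
  have hR : 0 ≤ R := (abs_nonneg t).trans ht
  have hK : |hilbertKernel ε u| ≤ u⁻¹ := by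
    simpa [abs_of_pos hu] using abs_hilbertKernel_le_inv_abs ε u
  have hf : |semicircleDensity (t - u) - semicircleDensity (t + u)| ≤ √R * √u / π := by
    refine (abs_semicircleDensity_sub_le _ _).trans ?_
    rw [show (t - u) ^ 2 - (t + u) ^ 2 = -(4 * t * u) by ring, abs_neg, abs_mul,
      abs_of_pos hu, abs_mul, abs_of_pos (by norm_num : (0 : ℝ) < 4)]
    calc √(4 * |t| * u) / (2 * π) ≤ √(4 * R * u) / (2 * π) := by gcongr
      _ = √R * √u / π := by
        rw [sqrt_mul' _ hu.le, sqrt_mul' _ hR, show (4 : ℝ) = 2 ^ 2 by norm_num,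
          sqrt_sq (by norm_num)]
        field_simp
  rw [semicircleHilbertBound, indicator_of_mem (show u ∈ Ioc 0 (R + 2) from ⟨hu, huR⟩),
    Real.norm_eq_abs, abs_mul]
  calc |hilbertKernel ε u| * |semicircleDensity (t - u) - semicircleDensity (t + u)|
      ≤ u⁻¹ * (√R * √u / π) := mul_le_mul hK hf (abs_nonneg _) (by positivity)
    _ = √R / π * (√u / u) := by ring
    _ = √R / π * (√u)⁻¹ := by rw [sqrt_div_self', one_div]

theorem measurable_semicircleHilbert (ε : ℝ) : Measurable (semicircleHilbert ε) := by
  have hjoint : StronglyMeasurable fun p : ℝ × ℝ => hilbertKernel ε p.2 *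
      (semicircleDensity (p.1 - p.2) - semicircleDensity (p.1 + p.2)) :=
    ((measurable_hilbertKernel ε).comp measurable_snd).mul
      (by fun_prop : Measurable fun p : ℝ × ℝ =>
        semicircleDensity (p.1 - p.2) - semicircleDensity (p.1 + p.2)) |>.stronglyMeasurable
  exact hjoint.integral_prod_right'.measurable

theorem abs_semicircleHilbert_le {R t : ℝ} (ht : |t| ≤ R) (ε : ℝ) :
    |semicircleHilbert ε t| ≤ ∫ u in Ioi 0, semicircleHilbertBound R u :=
  norm_integral_le_of_norm_le (integrableOn_semicircleHilbertBound ((abs_nonneg t).trans ht))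
    ((ae_restrict_iff' measurableSet_Ioi).2
      (ae_of_all _ fun _ hu => norm_hilbertKernel_mul_sub_le ht ε hu))

theorem tendsto_semicircleHilbert (t : ℝ) :
    Tendsto (fun ε => semicircleHilbert ε t) (𝓝 0) (𝓝 (semicircleHilbert 0 t)) := by
  refine tendsto_integral_filter_of_dominated_convergence (semicircleHilbertBound |t|)
    (.of_forall fun ε => ?_) (.of_forall fun ε => ?_)
    (integrableOn_semicircleHilbertBound (abs_nonneg t)) (ae_of_all _ fun u => ?_)
  · exact ((measurable_hilbertKernel ε).mul (by fun_prop)).aestronglyMeasurable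
  · exact (ae_restrict_iff' measurableSet_Ioi).2
      (ae_of_all _ fun _ hu => norm_hilbertKernel_mul_sub_le le_rfl ε hu)
  · exact (tendsto_hilbertKernel u).mul_const _

noncomputable def semicircleLaw : Measure ℝ :=
  volume.withDensity fun s => ENNReal.ofReal (semicircleDensity s)

theorem withDensity_indicator_Icc_eq_semicircleLaw :
    (volume.withDensity fun t => ENNReal.ofReal (Set.indicator (Set.Icc (-2 : ℝ) 2)
      (fun t => Real.sqrt (4 - t ^ 2) / (2 * Real.pi)) t)) = semicircleLaw := by
  congr with t
  exact congrArg ENNReal.ofReal (congrFun indicator_Icc_semicircleDensity t)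

instance : IsFiniteMeasure semicircleLaw :=
  isFiniteMeasure_withDensity_ofReal (continuous_semicircleDensity.integrable_of_hasCompactSupport
    hasCompactSupport_semicircleDensity).hasFiniteIntegral

theorem ae_semicircleLaw_mem_Icc : ∀ᵐ s ∂semicircleLaw, s ∈ Icc (-2 : ℝ) 2 :=
  (ae_withDensity_iff (by fun_prop)).2 <| ae_of_all _ fun s hs => by
    by_contra h
    simp [semicircleDensity_eq_zero_of_notMem h] at hs

theorem integral_semicircleLaw (h : ℝ → ℝ) :
    ∫ s, h s ∂semicircleLaw = ∫ s, semicircleDensity s * h s := by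
  rw [semicircleLaw, integral_withDensity_eq_integral_toReal_smul (by fun_prop)
    (ae_of_all _ fun _ => ENNReal.ofReal_lt_top)]
  simp [ENNReal.toReal_ofReal (semicircleDensity_nonneg _)]

theorem two_mul_integral_semicircleMixture (a : ℝ) {ε : ℝ} (hε : ε ≠ 0) (t : ℝ) :
    2 * ∫ s, (t - s) / ((t - s) ^ 2 + ε ^ 2)
        ∂((1 / 2 : ℝ≥0∞) • semicircleLaw + (1 / 2 : ℝ≥0∞) • Measure.dirac a) =
      semicircleHilbert ε t + hilbertKernel ε (t - a) := by
  have hint : Integrable (fun s => hilbertKernel ε (t - s)) semicircleLaw :=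
    .of_bound ((continuous_hilbertKernel hε).comp (continuous_sub_left t)).aestronglyMeasurable
      _ (ae_of_all _ fun s => abs_hilbertKernel_le hε (t - s))
  rw [← integral_semicircleDensity_mul_hilbertKernel hε, ← integral_semicircleLaw]
  exact two_mul_integral_half_smul_add_half_smul_dirac hint a

theorem ae_semicircleMixture (a : ℝ) :
    ∀ᵐ t ∂((1 / 2 : ℝ≥0∞) • semicircleLaw + (1 / 2 : ℝ≥0∞) • Measure.dirac a),
      t ∈ Icc (-2 : ℝ) 2 ∨ t = a := by
  rw [ae_add_measure_iff]
  exact ⟨Measure.ae_smul_measure (ae_semicircleLaw_mem_Icc.mono fun _ => Or.inl) _,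
    Measure.ae_smul_measure (by rw [ae_dirac_eq]; exact Or.inr rfl) _⟩

theorem abs_hilbertKernel_sub_le {a t : ℝ} (ha : 2 < |a|) (ht : t ∈ Icc (-2 : ℝ) 2 ∨ t = a)
    (ε : ℝ) : |hilbertKernel ε (t - a)| ≤ (|a| - 2)⁻¹ := by
  rcases ht with ht | rfl
  · have hta : |a| - 2 ≤ |t - a| := by
      rw [abs_sub_comm]
      linarith [abs_sub_abs_le_abs_sub a t, abs_le.2 ht]
    exact (abs_hilbertKernel_le_inv_abs ε _).trans (inv_anti₀ (by linarith) hta)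
  · simp [hilbertKernel, ha.le]

theorem stmt_15 (a : ℝ) (ha : 2 < |a|) (σ μ : Measure ℝ)
    (hσ : σ = volume.withDensity fun t =>
      ENNReal.ofReal (Set.indicator (Set.Icc (-2:ℝ) 2)
        (fun t => Real.sqrt (4 - t ^ 2) / (2 * Real.pi)) t))
    (hμ : μ = (1/2 : ℝ≥0∞) • σ + (1/2 : ℝ≥0∞) • Measure.dirac a) :
    ∃ g : ℝ → ℝ, MemLp g 2 μ ∧
      Filter.Tendsto (fun ε : ℝ =>
          eLpNorm (fun t => (2 * ∫ s, (t - s) / ((t - s) ^ 2 + ε ^ 2) ∂μ) - g t) 2 μ)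
        (nhdsWithin 0 (Set.Ioi 0)) (nhds 0) := by
  obtain rfl : σ = semicircleLaw := hσ.trans withDensity_indicator_Icc_eq_semicircleLaw
  set F : ℝ → ℝ → ℝ := fun ε t => semicircleHilbert ε t + hilbertKernel ε (t - a)
  have hmeas (ε : ℝ) : Measurable (F ε) :=
    (measurable_semicircleHilbert ε).add
      ((measurable_hilbertKernel ε).comp (measurable_sub_const a))
  have hbound (ε : ℝ) : ∀ᵐ t ∂μ,
      ‖F ε t‖ ≤ (∫ u in Ioi 0, semicircleHilbertBound |a| u) + (|a| - 2)⁻¹ := by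
    filter_upwards [hμ ▸ ae_semicircleMixture a] with t ht
    have hta : |t| ≤ |a| := by
      rcases ht with ht | rfl
      · exact (abs_le.2 ht).trans ha.le
      · rfl
    exact (abs_add_le _ _).trans
      (add_le_add (abs_semicircleHilbert_le hta ε) (abs_hilbertKernel_sub_le ha ht ε))
  have : IsFiniteMeasure μ := by
    have := semicircleLaw.smul_finite (c := 1 / 2) (by simp)
    have := (Measure.dirac a).smul_finite (c := 1 / 2) (by simp)
    rw [hμ]
    infer_instance
  refine ⟨F 0, .of_bound (hmeas 0).aestronglyMeasurable _ (hbound 0), ?_⟩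
  refine (tendsto_eLpNorm_sub_of_tendsto_ae_of_bounded two_ne_zero ENNReal.ofNat_ne_top
    (.of_forall fun ε => (hmeas ε).aestronglyMeasurable) (hmeas 0).aestronglyMeasurable
    (.of_forall hbound) (hbound 0) (ae_of_all _ fun t => ?_)).congr' ?_
  · exact ((tendsto_semicircleHilbert t).add (tendsto_hilbertKernel (t - a))).mono_left
      nhdsWithin_le_nhds
  · filter_upwards [self_mem_nhdsWithin] with ε hε
    refine congrArg (eLpNorm · 2 μ) (funext fun t => ?_)
    rw [hμ, two_mul_integral_semicircleMixture a (ne_of_gt hε)]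
end
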